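/- With k₁ ≥ 0, k₂ ≥ 0, any solution z of z'(t) + k₁ z(t) = k₂ z(t-r) with C¹ initial data z₀ on [-r,0] satisfies |z(t)| ≤ C₀ e^{-k₁ t} e_r^{\bar k₂ t} for t > 0, where C₀ = e^{-k₁ r}|z₀(-r)| + ∫_{-r}^0 e^{k₁ s}|z₀'(s) + k₁ z₀(s)| ds and \bar k₂ = k₂ e^{k₁ r}. -/

import Mathlib

open Real

noncomputable def delayedExp (r k : ℝ) (t : ℝ) : ℝ :=
  if t < -r then 0
  else if t < 0 then 1
  else ∑ j ∈ Finset.range (⌊t / r⌋.toNat + 2),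
    k ^ j * (t - ((j : ℝ) - 1) * r) ^ j / (Nat.factorial j)

/-! With `w t = exp (k₁ t) z t` the equation becomes `w' t = k̄₂ w (t - r)`, and on `[-r, 0]` the
fundamental theorem of calculus for `s ↦ exp (k₁ s) z₀ s` gives `|w| ≤ C₀`. Integrating the
truncated series of the delayed exponential `E = e_r^{k̄₂ t}` term by term shows `E = 1` on `[-r, 0]` and
`E t = 1 + k̄₂ ∫_{-r}^{t-r} E` for `t ≥ 0`; integrating `w'` over `[0, t]` then propagates the bound
`|w| ≤ C₀ E` from `[-r, t - r]` to `t`, hence by induction to every interval `[-r, n r]`. -/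

open Set Filter Topology MeasureTheory

lemma abs_le_abs_add_integral_abs_deriv {f f' : ℝ → ℝ} {a b s : ℝ} (hs : s ∈ Icc a b)
    (hf : ∀ x ∈ Icc a b, HasDerivAt f (f' x) x) (hf' : IntervalIntegrable f' volume a b) :
    |f s| ≤ |f a| + ∫ x in a..b, |f' x| := by
  have hsub : uIcc a s ⊆ Icc a b := by
    rw [uIcc_of_le hs.1]; exact Icc_subset_Icc_right hs.2
  have hFTC : ∫ x in a..s, f' x = f s - f a :=
    intervalIntegral.integral_eq_sub_of_hasDerivAt (fun x hx => hf x (hsub hx))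
      (hf'.mono_set (by rwa [uIcc_of_le (hs.1.trans hs.2)]))
  calc |f s| = |f a + ∫ x in a..s, f' x| := by rw [hFTC, add_sub_cancel]
    _ ≤ |f a| + ∫ x in a..s, |f' x| :=
      (abs_add_le _ _).trans (add_le_add le_rfl (intervalIntegral.abs_integral_le_integral_abs hs.1))
    _ ≤ |f a| + ∫ x in a..b, |f' x| :=
      add_le_add le_rfl (intervalIntegral.integral_mono_interval le_rfl hs.1 hs.2
        (ae_of_all _ fun x => abs_nonneg _) hf'.abs)

lemma hasDerivAt_max_zero_pow (n : ℕ) (x : ℝ) :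
    HasDerivAt (fun y : ℝ => max y 0 ^ (n + 2)) ((n + 2) * max x 0 ^ (n + 1)) x := by
  have off_zero : ∀ y ≠ 0,
      HasDerivAt (fun y : ℝ => max y 0 ^ (n + 2)) ((n + 2) * max y 0 ^ (n + 1)) y := by
    intro y hy
    rcases hy.lt_or_gt with hy | hy
    · have h : (fun u : ℝ => max u 0 ^ (n + 2)) =ᶠ[𝓝 y] fun _ => 0 := by
        filter_upwards [Iio_mem_nhds hy] with u hu
        simp [max_eq_right (mem_Iio.mp hu).le]
      simpa [max_eq_right hy.le] using (hasDerivAt_const y (0 : ℝ)).congr_of_eventuallyEq h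
    · have h : (fun u : ℝ => max u 0 ^ (n + 2)) =ᶠ[𝓝 y] fun u => u ^ (n + 2) := by
        filter_upwards [Ioi_mem_nhds hy] with u hu
        rw [max_eq_left (mem_Ioi.mp hu).le]
      simpa [max_eq_left hy.le] using (hasDerivAt_pow (n + 2) y).congr_of_eventuallyEq h
  rcases eq_or_ne x 0 with rfl | hx
  · exact hasDerivAt_of_hasDerivAt_of_ne off_zero (by fun_prop) (by fun_prop)
  · exact off_zero x hx

-- The cut-off `max _ 0` makes `delayedExp` the sum of the first `N + 1` terms on all of `[-r, N r)`.
noncomputable def delayedExpTerm (a r : ℝ) (j : ℕ) (t : ℝ) : ℝ :=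
  a ^ j * max (t - ((j : ℝ) - 1) * r) 0 ^ j / j.factorial

noncomputable def delayedExpSum (a r : ℝ) (N : ℕ) (t : ℝ) : ℝ :=
  ∑ j ∈ Finset.range N, delayedExpTerm a r j t

lemma continuous_delayedExpTerm (a r : ℝ) (j : ℕ) : Continuous (delayedExpTerm a r j) := by
  unfold delayedExpTerm; fun_prop

lemma continuous_delayedExpSum (a r : ℝ) (N : ℕ) : Continuous (delayedExpSum a r N) :=
  continuous_finsetSum _ fun j _ => continuous_delayedExpTerm a r j

lemma delayedExpTerm_zero (a r t : ℝ) : delayedExpTerm a r 0 t = 1 := by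
  simp [delayedExpTerm]

lemma mul_integral_delayedExpTerm {r : ℝ} (hr : 0 ≤ r) (a : ℝ) {t : ℝ} (ht : 0 ≤ t) (j : ℕ) :
    a * ∫ u in (-r)..(t - r), delayedExpTerm a r j u = delayedExpTerm a r (j + 1) t := by
  rcases j with _ | k
  · simp [delayedExpTerm, max_eq_left ht]
  · have hF : ∀ u, HasDerivAt (fun y => a ^ (k + 1) / (k + 2).factorial * max (y - k * r) 0 ^ (k + 2))
        (delayedExpTerm a r (k + 1) u) u := by
      intro u
      have h := ((hasDerivAt_max_zero_pow k (u - k * r)).comp u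
        ((hasDerivAt_id u).sub_const (k * r))).const_mul (a ^ (k + 1) / (k + 2).factorial)
      refine h.congr_deriv ?_
      simp only [delayedExpTerm, Nat.cast_succ, add_sub_cancel_right, Nat.factorial_succ (k + 1)]
      push_cast
      field_simp
      ring
    rw [intervalIntegral.integral_eq_sub_of_hasDerivAt (fun u _ => hF u)
      ((continuous_delayedExpTerm a r _).intervalIntegrable _ _)]
    have hleft : max (-r - k * r) 0 = 0 := max_eq_right (by nlinarith [k.cast_nonneg (α := ℝ)])
    simp only [delayedExpTerm, hleft, Nat.factorial_succ (k + 1)]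
    rw [show t - r - k * r = t - ((k + 1 + 1 : ℕ) - 1) * r by push_cast; ring]
    push_cast
    field_simp
    ring

lemma delayedExpSum_succ {r : ℝ} (hr : 0 ≤ r) (a : ℝ) {t : ℝ} (ht : 0 ≤ t) (N : ℕ) :
    delayedExpSum a r (N + 1) t = 1 + a * ∫ u in (-r)..(t - r), delayedExpSum a r N u := by
  simp only [delayedExpSum]
  rw [Finset.sum_range_succ', delayedExpTerm_zero,
    intervalIntegral.integral_finsetSum fun j _ =>
      (continuous_delayedExpTerm a r j).intervalIntegrable _ _,
    Finset.mul_sum, add_comm]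
  simp only [mul_integral_delayedExpTerm hr a ht]

lemma delayedExp_eq_delayedExpSum {r : ℝ} (hr : 0 < r) (a : ℝ) {t : ℝ} (ht : -r ≤ t) {N : ℕ}
    (hN : t < N * r) : delayedExp r a t = delayedExpSum a r (N + 1) t := by
  rcases lt_or_ge t 0 with ht0 | ht0
  · rw [delayedExp, if_neg (not_lt.mpr ht), if_pos ht0, delayedExpSum,
      Finset.sum_eq_single 0 _ (by simp), delayedExpTerm_zero]
    intro j _ hj
    have hneg : t - ((j : ℝ) - 1) * r ≤ 0 := by
      nlinarith [(Nat.one_le_cast (α := ℝ)).mpr (Nat.one_le_iff_ne_zero.mpr hj)]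
    simp [delayedExpTerm, max_eq_right hneg, hj]
  · rw [delayedExp, if_neg (by linarith), if_neg (not_lt.mpr ht0), Int.floor_toNat, delayedExpSum]
    set m := ⌊t / r⌋₊
    have hm_le : (m : ℝ) * r ≤ t := (le_div_iff₀ hr).mp (Nat.floor_le (by positivity))
    have hm_lt : t < (m + 1) * r := (div_lt_iff₀ hr).mp (Nat.lt_floor_add_one _)
    have hmN : m < N := (Nat.floor_lt (by positivity)).mpr ((div_lt_iff₀ hr).mpr hN)
    refine Finset.sum_subset_zero_on_sdiff (Finset.range_subset_range.mpr (by omega)) ?_ ?_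
    · intro j hj
      have hj : m + 2 ≤ j := by simpa using (Finset.mem_sdiff.mp hj).2
      have hneg : t - ((j : ℝ) - 1) * r ≤ 0 := by
        have : (m : ℝ) + 1 ≤ j - 1 := by
          have : ((m + 2 : ℕ) : ℝ) ≤ j := by exact_mod_cast hj
          push_cast at this; linarith
        nlinarith
      simp [delayedExpTerm, max_eq_right hneg, show j ≠ 0 by omega]
    · intro j hj
      have hj : (j : ℝ) ≤ m + 1 := by exact_mod_cast Nat.lt_succ_iff.mp (Finset.mem_range.mp hj)
      rw [delayedExpTerm, max_eq_left (by nlinarith)]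

lemma delayedExp_of_mem_Icc {r : ℝ} (hr : 0 < r) (a : ℝ) {t : ℝ} (ht : t ∈ Icc (-r) 0) :
    delayedExp r a t = 1 := by
  rw [delayedExp_eq_delayedExpSum hr a ht.1 (N := 1) (by simpa using ht.2.trans_lt hr)]
  simp [delayedExpSum, Finset.sum_range_succ, delayedExpTerm, ht.2]

lemma continuousOn_delayedExp {r : ℝ} (hr : 0 < r) (a : ℝ) :
    ContinuousOn (delayedExp r a) (Ici (-r)) := by
  intro t ht
  obtain ⟨N, hN⟩ := exists_nat_gt (t / r)
  have hN : t < N * r := (div_lt_iff₀ hr).mp hN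
  have hEq : EqOn (delayedExp r a) (delayedExpSum a r (N + 1)) (Ici (-r) ∩ Iio (N * r)) :=
    fun u hu => delayedExp_eq_delayedExpSum hr a hu.1 hu.2
  exact ((continuous_delayedExpSum a r _).continuousOn.congr hEq t ⟨ht, hN⟩).mono_of_mem_nhdsWithin
    (inter_mem_nhdsWithin _ (Iio_mem_nhds hN))

lemma delayedExp_eq_one_add_integral {r : ℝ} (hr : 0 < r) (a : ℝ) {t : ℝ} (ht : 0 ≤ t) :
    delayedExp r a t = 1 + a * ∫ u in (-r)..(t - r), delayedExp r a u := by
  obtain ⟨N, hN⟩ := exists_nat_gt (t / r)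
  have hN : t < (N + 1) * r := by nlinarith [(div_lt_iff₀ hr).mp hN]
  have hEq : EqOn (delayedExp r a) (delayedExpSum a r (N + 1)) (uIcc (-r) (t - r)) := by
    intro u hu
    rw [uIcc_of_le (by linarith)] at hu
    exact delayedExp_eq_delayedExpSum hr a hu.1 (by linarith [hu.2])
  rw [intervalIntegral.integral_congr hEq, ← delayedExpSum_succ hr.le a ht]
  exact delayedExp_eq_delayedExpSum hr a (by linarith) (by push_cast; linarith)

section DelayComparison

variable {r a C : ℝ} {w : ℝ → ℝ}

lemma abs_le_mul_delayedExp_of_le_sub (hr : 0 < r) (ha : 0 ≤ a) (hw : ContinuousOn w (Ici (-r)))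
    (hw' : ∀ t > 0, HasDerivAt w (a * w (t - r)) t) (h0 : |w 0| ≤ C) {u : ℝ} (hu : 0 < u)
    (hprev : ∀ s ∈ Icc (-r) (u - r), |w s| ≤ C * delayedExp r a s) :
    |w u| ≤ C * delayedExp r a u := by
  have hshift : MapsTo (fun s => s - r) (Icc 0 u) (Ici (-r)) := fun s hs => by
    simp only [mem_Ici]; linarith [hs.1]
  have hwr : ContinuousOn (fun s => a * w (s - r)) (Icc 0 u) :=
    continuousOn_const.mul (hw.comp (continuous_sub_right r).continuousOn hshift)
  have hEr : ContinuousOn (fun s => a * (C * delayedExp r a (s - r))) (Icc 0 u) :=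
    continuousOn_const.mul (continuousOn_const.mul
      ((continuousOn_delayedExp hr a).comp (continuous_sub_right r).continuousOn hshift))
  have hFTC : ∫ s in (0 : ℝ)..u, a * w (s - r) = w u - w 0 :=
    intervalIntegral.integral_eq_sub_of_hasDeriv_right_of_le hu.le
      (hw.mono fun s hs => by simp only [mem_Ici]; linarith [hs.1])
      (fun s hs => (hw' s hs.1).hasDerivWithinAt) (hwr.intervalIntegrable_of_Icc hu.le)
  have hmono : ∀ s ∈ Icc 0 u, |a * w (s - r)| ≤ a * (C * delayedExp r a (s - r)) := by
    intro s hs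
    rw [abs_mul, abs_of_nonneg ha]
    exact mul_le_mul_of_nonneg_left (hprev _ ⟨by linarith [hs.1], by linarith [hs.2]⟩) ha
  calc |w u| = |w 0 + ∫ s in (0 : ℝ)..u, a * w (s - r)| := by rw [hFTC, add_sub_cancel]
    _ ≤ |w 0| + ∫ s in (0 : ℝ)..u, |a * w (s - r)| :=
      (abs_add_le _ _).trans (add_le_add le_rfl (intervalIntegral.abs_integral_le_integral_abs hu.le))
    _ ≤ C + ∫ s in (0 : ℝ)..u, a * (C * delayedExp r a (s - r)) :=
      add_le_add h0 (intervalIntegral.integral_mono_on hu.le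
        (hwr.abs.intervalIntegrable_of_Icc hu.le) (hEr.intervalIntegrable_of_Icc hu.le) hmono)
    _ = C * delayedExp r a u := by
      rw [delayedExp_eq_one_add_integral hr a hu.le, intervalIntegral.integral_const_mul,
        intervalIntegral.integral_const_mul, intervalIntegral.integral_comp_sub_right, zero_sub]
      ring

lemma abs_le_mul_delayedExp (hr : 0 < r) (ha : 0 ≤ a) (hw : ContinuousOn w (Ici (-r)))
    (hw' : ∀ t > 0, HasDerivAt w (a * w (t - r)) t) (hinit : ∀ s ∈ Icc (-r) 0, |w s| ≤ C)
    {t : ℝ} (ht : -r ≤ t) : |w t| ≤ C * delayedExp r a t := by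
  have hbase : ∀ s ∈ Icc (-r) 0, |w s| ≤ C * delayedExp r a s := fun s hs => by
    rw [delayedExp_of_mem_Icc hr a hs, mul_one]; exact hinit s hs
  have hstep : ∀ n : ℕ, ∀ s ∈ Icc (-r) (n * r), |w s| ≤ C * delayedExp r a s := by
    intro n
    induction n with
    | zero => simpa using hbase
    | succ n ih =>
      intro s hs
      rcases le_or_gt s 0 with hs0 | hs0
      · exact hbase s ⟨hs.1, hs0⟩
      · refine abs_le_mul_delayedExp_of_le_sub hr ha hw hw' (hinit 0 ⟨by linarith, le_rfl⟩) hs0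
          fun v hv => ih v ⟨hv.1, ?_⟩
        push_cast at hs
        linarith [hv.2, hs.2]
  obtain ⟨n, hn⟩ := exists_nat_ge (t / r)
  exact hstep n t ⟨ht, (div_le_iff₀ hr).mp hn⟩

end DelayComparison

lemma hasDerivAt_exp_mul_of_hasDerivAt {z : ℝ → ℝ} {k₁ k₂ r t : ℝ}
    (hz : HasDerivAt z (k₂ * z (t - r) - k₁ * z t) t) :
    HasDerivAt (fun s => exp (k₁ * s) * z s)
      (k₂ * exp (k₁ * r) * (exp (k₁ * (t - r)) * z (t - r))) t := by
  refine ((((hasDerivAt_id t).const_mul k₁).exp).mul hz).congr_deriv ?_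
  rw [id, show k₁ * t = k₁ * r + k₁ * (t - r) by ring, exp_add]
  ring

theorem stmt_6_general (r k₁ k₂ : ℝ) (hr : 0 < r) (hk₂ : 0 ≤ k₂)
    (z₀ z : ℝ → ℝ)
    (hz₀ : ContDiff ℝ 1 z₀)
    (hcont : ContinuousOn z (Set.Ici (-r)))
    (hinit : ∀ s ∈ Set.Icc (-r) (0 : ℝ), z s = z₀ s)
    (hode : ∀ t > (0 : ℝ), HasDerivAt z (k₂ * z (t - r) - k₁ * z t) t) :
    ∀ t > (0 : ℝ), |z t| ≤
      (Real.exp (-k₁ * r) * |z₀ (-r)| +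
        ∫ s in (-r)..(0 : ℝ), Real.exp (k₁ * s) * |deriv z₀ s + k₁ * z₀ s|) *
      Real.exp (-k₁ * t) * delayedExp r (k₂ * Real.exp (k₁ * r)) t := by
  intro t ht
  have hz₀' : ∀ s, HasDerivAt (fun s => exp (k₁ * s) * z₀ s)
      (exp (k₁ * s) * (deriv z₀ s + k₁ * z₀ s)) s := fun s =>
    ((((hasDerivAt_id s).const_mul k₁).exp).mul
      ((hz₀.differentiable one_ne_zero) s).hasDerivAt).congr_deriv (by rw [id]; ring)
  have hz₀'_cont : Continuous fun s => exp (k₁ * s) * (deriv z₀ s + k₁ * z₀ s) := by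
    have := hz₀.continuous_deriv le_rfl
    fun_prop
  have hbound : ∀ s ∈ Icc (-r) 0, |exp (k₁ * s) * z s| ≤
      exp (-k₁ * r) * |z₀ (-r)| + ∫ σ in (-r)..(0 : ℝ), exp (k₁ * σ) * |deriv z₀ σ + k₁ * z₀ σ| := by
    intro s hs
    rw [hinit s hs]
    simpa [abs_mul] using
      abs_le_abs_add_integral_abs_deriv hs (fun x _ => hz₀' x) (hz₀'_cont.intervalIntegrable _ _)
  have hw := abs_le_mul_delayedExp hr (by positivity) (by fun_prop)
    (fun s hs => hasDerivAt_exp_mul_of_hasDerivAt (hode s hs)) hbound (t := t) (by linarith)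
  rw [abs_mul, abs_of_pos (exp_pos _)] at hw
  calc |z t| = exp (-k₁ * t) * (exp (k₁ * t) * |z t|) := by
        rw [← mul_assoc, ← exp_add]; simp
    _ ≤ _ := mul_le_mul_of_nonneg_left hw (exp_pos _).le
    _ = _ := by ring

theorem stmt_6 (r k₁ k₂ : ℝ) (hr : 0 < r) (hk₁ : 0 ≤ k₁) (hk₂ : 0 ≤ k₂)
    (z₀ z : ℝ → ℝ)
    (hz₀ : ContDiff ℝ 1 z₀)
    (hcont : ContinuousOn z (Set.Ici (-r)))
    (hinit : ∀ s ∈ Set.Icc (-r) (0 : ℝ), z s = z₀ s)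
    (hode : ∀ t > (0 : ℝ), HasDerivAt z (k₂ * z (t - r) - k₁ * z t) t) :
    ∀ t > (0 : ℝ), |z t| ≤
      (Real.exp (-k₁ * r) * |z₀ (-r)| +
        ∫ s in (-r)..(0 : ℝ), Real.exp (k₁ * s) * |deriv z₀ s + k₁ * z₀ s|) *
      Real.exp (-k₁ * t) * delayedExp r (k₂ * Real.exp (k₁ * r)) t :=
  stmt_6_general r k₁ k₂ hr hk₂ z₀ z hz₀ hcont hinit hode
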